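/- For every nonnegative integer n, the number of partitions of n in which the even parts are distinct (and the odd parts are unrestricted) equals the number of partitions of n with no part divisible by 4 (i.e., the number of 4-regular partitions of n). -/

import Mathlib

/-!
If parts divisible by `m` may occur fewer than `k` times, the generating function of such
partitions is `∏_{m ∤ i} (1 - X^i)⁻¹ · ∏_{m ∣ i} (1 - X^{ki}) / (1 - X^i)
= ∏_j (1 - X^{mkj}) / ∏_i (1 - X^i)`, which depends on `m` and `k` only through `mk`.
Partitions with distinct even parts are the case `(m, k) = (2, 2)`, and 4-regular partitions
the case `(4, 1)`.
-/

/-- `ped n` is the number of partitions of `n` in which the even parts are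
distinct (and the odd parts are unrestricted). -/
def ped (n : ℕ) : ℕ :=
  Fintype.card {p : n.Partition // ∀ x ∈ p.parts, Even x → p.parts.count x ≤ 1}

open Finset PowerSeries
open scoped PowerSeries.WithPiTopology

theorem tprod_ite_dvd_add_one {M : Type*} [CommMonoid M] [TopologicalSpace M] {m : ℕ}
    (hm : 0 < m) (g : ℕ → M) :
    ∏' i, (if m ∣ i + 1 then g (i + 1) else 1) = ∏' i, g ((i + 1) * m) := by
  have hpos (i : ℕ) : 1 ≤ (i + 1) * m := Nat.one_le_iff_ne_zero.mpr (by positivity)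
  refine tprod_eq_tprod_of_ne_one_bij (fun i ↦ (i.val + 1) * m - 1) ?_ ?_ ?_
  · intro a b (h : (a.val + 1) * m - 1 = (b.val + 1) * m - 1)
    have : (a.val + 1) * m = (b.val + 1) * m := by
      have := hpos a.val
      have := hpos b.val
      omega
    exact Subtype.ext (by simpa [hm.ne'] using this)
  · intro i hi
    rw [Function.mem_mulSupport] at hi
    split_ifs at hi with hdvd
    · obtain ⟨j, hj⟩ := hdvd
      obtain ⟨j, rfl⟩ := Nat.exists_eq_add_one_of_ne_zero (n := j) (by rintro rfl; simp at hj)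
      refine ⟨⟨j, by simpa [Function.mem_mulSupport, mul_comm, ← hj] using hi⟩, ?_⟩
      change (j + 1) * m - 1 = i
      rw [mul_comm, ← hj, Nat.add_sub_cancel]
    · exact absurd rfl hi
  · intro i
    simp [Nat.sub_add_cancel (hpos i)]

namespace Nat.Partition

def dvdCountRestricted (n m k : ℕ) : Finset n.Partition :=
  univ.filter fun p ↦ ∀ i ∈ p.parts, m ∣ i → p.parts.count i < k

theorem genFun_dvdCountRestricted {R : Type*} [CommSemiring R] (m k : ℕ) :
    genFun (fun i c ↦ if m ∣ i → c < k then (1 : R) else 0) =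
      PowerSeries.mk fun n ↦ (#(dvdCountRestricted n m k) : R) := by
  ext n
  simp_rw [coeff_genFun, coeff_mk, dvdCountRestricted, card_filter, Finsupp.prod, prod_boole]
  simp

theorem dvdCountRestricted_one (n m : ℕ) :
    dvdCountRestricted n m 1 = restricted n (¬ m ∣ ·) := by
  ext p
  simp only [dvdCountRestricted, restricted, mem_filter, mem_univ, true_and, Nat.lt_one_iff,
    Multiset.count_eq_zero]
  exact forall₂_congr fun i hi ↦ by simp [hi]

section PowerSeries
variable {R : Type*} [CommRing R] [TopologicalSpace R] [T2Space R] [IsTopologicalRing R]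

theorem one_add_tsum_mul_one_sub_X_pow {m k a : ℕ} (hk : 0 < k) (ha : 0 < a) :
    (1 + ∑' j, (if m ∣ a → j + 1 < k then (1 : R) else 0) •
      (X : R⟦X⟧) ^ (a * (j + 1))) * (1 - X ^ a) = if m ∣ a then 1 - X ^ (a * k) else 1 := by
  simp_rw [pow_mul]
  split_ifs with hdvd
  · have hsum : ∑' j, (if m ∣ a → j + 1 < k then (1 : R) else 0) •
        ((X : R⟦X⟧) ^ a) ^ (j + 1) = ∑ j ∈ range (k - 1), (X ^ a) ^ (j + 1) := by
      rw [tsum_eq_sum (s := range (k - 1))]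
      · refine sum_congr rfl fun j hj ↦ ?_
        have : j + 1 < k := by simp at hj; omega
        simp [hdvd, this]
      · intro j hj
        have : ¬ j + 1 < k := by simp at hj; omega
        simp [hdvd, this]
    obtain ⟨k, rfl⟩ := Nat.exists_eq_add_one_of_ne_zero hk.ne'
    have hgeom : 1 + ∑ j ∈ range k, ((X : R⟦X⟧) ^ a) ^ (j + 1) =
        ∑ j ∈ range (k + 1), (X ^ a) ^ j := by
      rw [sum_range_succ', pow_zero, add_comm]
    rw [hsum, Nat.add_sub_cancel, hgeom, geom_sum_mul_neg]
  · have hX : constantCoeff ((X : R⟦X⟧) ^ a) = 0 := by simp [ha.ne']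
    simp only [hdvd, false_imp_iff, if_true, one_smul]
    have hgeom := (WithPiTopology.summable_pow_of_constantCoeff_eq_zero hX).tsum_eq_zero_add
    rw [pow_zero] at hgeom
    rw [← hgeom, WithPiTopology.tsum_pow_mul_one_sub_of_constantCoeff_eq_zero hX]

theorem powerSeriesMk_card_dvdCountRestricted_mul {m k : ℕ} (hm : 0 < m) (hk : 0 < k) :
    (PowerSeries.mk fun n ↦ (#(dvdCountRestricted n m k) : R)) * ∏' i, (1 - X ^ (i + 1)) =
      ∏' i, (1 - X ^ ((i + 1) * (m * k))) := by
  rw [← genFun_dvdCountRestricted, genFun_eq_tprod,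
    ← (multipliable_genFun fun i c ↦ if m ∣ i → c < k then (1 : R) else 0).tprod_mul
      (WithPiTopology.multipliable_one_sub_X_pow R)]
  simp_rw [one_add_tsum_mul_one_sub_X_pow hk (Nat.succ_pos _)]
  rw [tprod_ite_dvd_add_one hm (fun a ↦ 1 - X ^ (a * k))]
  simp_rw [mul_assoc]

end PowerSeries

theorem card_dvdCountRestricted (n : ℕ) {m k : ℕ} (hm : 0 < m) (hk : 0 < k) :
    #(dvdCountRestricted n m k) = #(dvdCountRestricted n (m * k) 1) := by
  have h : (PowerSeries.mk fun n ↦ (#(dvdCountRestricted n m k) : ℤ)) *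
      ∏' i, (1 - X ^ (i + 1)) =
      (PowerSeries.mk fun n ↦ (#(dvdCountRestricted n (m * k) 1) : ℤ)) *
        ∏' i, (1 - X ^ (i + 1)) := by
    rw [powerSeriesMk_card_dvdCountRestricted_mul hm hk,
      powerSeriesMk_card_dvdCountRestricted_mul (Nat.mul_pos hm hk) one_pos, mul_one]
  have hE := WithPiTopology.tprod_one_sub_X_pow_ne_zero ℤ
  simpa using congr(coeff n $(mul_right_cancel₀ hE h))

end Nat.Partition

theorem ped_eq_four_regular (n : ℕ) :
    ped n = Fintype.card {p : n.Partition // ∀ x ∈ p.parts, ¬ (4 ∣ x)} := by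
  have hped : ped n = #(Nat.Partition.dvdCountRestricted n 2 2) := by
    simp only [ped, Fintype.card_subtype, Nat.Partition.dvdCountRestricted, even_iff_two_dvd,
      Nat.lt_succ_iff]
  have hreg : Fintype.card {p : n.Partition // ∀ x ∈ p.parts, ¬ (4 ∣ x)} =
      #(Nat.Partition.dvdCountRestricted n (2 * 2) 1) := by
    rw [Nat.Partition.dvdCountRestricted_one, Fintype.card_subtype, Nat.Partition.restricted]
  rw [hped, hreg, Nat.Partition.card_dvdCountRestricted n two_pos two_pos]
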